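/- When tasks may additionally underreport their values, M_BFS and M_DFS remain truthful: if a task t_j is unmatched in the maximum-weight b-matching computed when it reports its true value q_j, then it is also unmatched when it reports any value q'_j with 0 < q'_j < q_j (edges fixed). Consequently, with tasks bounded by their statements in both edges and values, reporting truthfully is a dominant strategy under M_BFS and M_DFS. -/

import Mathlib

open Classical

/-- An edge of the bipartite graph: a pair (agent, task). -/
abbrev Edge (n m : ℕ) := Fin n × Fin m

variable {n m : ℕ}

/-- Number of tasks assigned to agent `i` in the edge set `μ`. -/
def deg (μ : Finset (Edge n m)) (i : Fin n) : ℕ := (μ.filter (fun e => e.1 = i)).card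

/-- `μ` is a b-matching over the edge set `E'`: it uses only edges of `E'`, each agent `i`
receives at most `b i` tasks, and each task is matched to at most one agent. -/
def IsBMatching (b : Fin n → ℕ) (E' μ : Finset (Edge n m)) : Prop :=
  μ ⊆ E' ∧ (∀ i, deg μ i ≤ b i) ∧ ∀ j : Fin m, (μ.filter (fun e => e.2 = j)).card ≤ 1

/-- Weight of a matching: total value of matched tasks. -/
noncomputable def weight (q : Fin m → ℝ) (μ : Finset (Edge n m)) : ℝ := ∑ e ∈ μ, q e.2

/-- Utility of agent `i`: total value of the tasks matched to `i`. -/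
noncomputable def util (q : Fin m → ℝ) (i : Fin n) (μ : Finset (Edge n m)) : ℝ :=
  ∑ e ∈ μ.filter (fun e => e.1 = i), q e.2

/-- `μ` is a maximum vertex-weighted b-matching over the edge set `E'`. -/
def IsMaxMatching (b : Fin n → ℕ) (q : Fin m → ℝ) (E' μ : Finset (Edge n m)) : Prop :=
  IsBMatching b E' μ ∧ ∀ ν, IsBMatching b E' ν → weight q ν ≤ weight q μ

/-- The edges of `E` incident to agent `i`. -/
def agentEdges (E : Finset (Edge n m)) (i : Fin n) : Finset (Edge n m) :=
  E.filter (fun e => e.1 = i)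

/-- The edge set obtained from `E` when agent `i` reports `S` instead of its true edges. -/
def deviate (E : Finset (Edge n m)) (i : Fin n) (S : Finset (Edge n m)) : Finset (Edge n m) :=
  E.filter (fun e => e.1 ≠ i) ∪ S

/-- A valid report of agent `i`: a nonempty subset of its true incident edges. -/
def ValidReport (E : Finset (Edge n m)) (i : Fin n) (S : Finset (Edge n m)) : Prop :=
  S ⊆ agentEdges E i ∧ S.Nonempty
open Classical in
/-- The tasks sorted in non-increasing order of value (ties broken by index). -/
noncomputable def sortedTasks (m : ℕ) (q : Fin m → ℝ) : List (Fin m) :=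
  List.insertionSort (fun j k => q k ≤ q j) (List.finRange m)

/-- The greedy mechanism `M_AP`: process tasks in non-increasing value order, assigning each
task to the highest-priority unsaturated agent connected to it, if any. -/
noncomputable def MAP (b : Fin n → ℕ) (q : Fin m → ℝ) (E' : Finset (Edge n m)) :
    Finset (Edge n m) :=
  (sortedTasks m q).foldl (fun μ j =>
    match (List.finRange n).find? (fun i => decide ((i, j) ∈ E' ∧ deg μ i < b i)) with
    | some i => insert (i, j) μ
    | none => μ) ∅

/-- `p = [(i₁,j₁),…,(i_L,j_L)]` is an augmenting path from task `j = j₁` with respect to the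
matching `μ` in the graph `E'`: the edges `(i_ℓ, j_ℓ)` are non-matching edges of `E'`, the
edges `(i_ℓ, j_{ℓ+1})` are matching edges, all interior agents are saturated and the final
agent is unsaturated. -/
structure IsAugPathFrom (b : Fin n → ℕ) (E' μ : Finset (Edge n m)) (j : Fin m)
    (p : List (Edge n m)) : Prop where
  ne : p ≠ []
  starts : ∀ e ∈ p.head?, e.2 = j
  mem : ∀ e ∈ p, e ∈ E' ∧ e ∉ μ
  matched : ∀ k, (h : k + 1 < p.length) →
    ((p.get ⟨k, Nat.lt_of_succ_lt h⟩).1, (p.get ⟨k + 1, h⟩).2) ∈ μ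
  satInterior : ∀ k, (h : k + 1 < p.length) →
    b (p.get ⟨k, Nat.lt_of_succ_lt h⟩).1 ≤ deg μ (p.get ⟨k, Nat.lt_of_succ_lt h⟩).1
  unsatLast : ∀ e ∈ p.getLast?, deg μ e.1 < b e.1
  agentsNodup : (p.map Prod.fst).Nodup
  tasksNodup : (p.map Prod.snd).Nodup

/-- The matching edges of an augmenting path. -/
def pathMatched (p : List (Edge n m)) : List (Edge n m) :=
  (p.zip p.tail).map (fun ef => (ef.1.1, ef.2.2))

/-- Flip an augmenting path: remove its matching edges and add its non-matching edges. -/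
def applyPath (μ : Finset (Edge n m)) (p : List (Edge n m)) : Finset (Edge n m) :=
  (μ \ (pathMatched p).toFinset) ∪ p.toFinset

/-- A numeric key realizing the lexicographic order (by vertex indices) on augmenting paths. -/
def pathKey (n m : ℕ) (p : List (Edge n m)) : ℕ :=
  ((p.flatMap fun (e : Edge n m) => [e.1.val + 1, e.2.val + 1]) ++
    List.replicate (2 * n - 2 * p.length) 0).foldl (fun a d => a * (n + m + 2) + d) 0

/-- DFS explores agents in priority order and goes deep first: it returns the lexicographically
least augmenting path. -/
def dfsCost (n m : ℕ) (p : List (Edge n m)) : ℕ := pathKey n m p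

/-- BFS returns a shortest augmenting path, exploring vertices in priority order: it returns
the lexicographically least augmenting path among those of minimum length. -/
def bfsCost (n m : ℕ) (p : List (Edge n m)) : ℕ :=
  p.length * (n + m + 2) ^ (2 * n + 2) + pathKey n m p

/-- Select the cost-minimal augmenting path from task `j`, if an augmenting path exists. -/
noncomputable def selectPath (cost : List (Edge n m) → ℕ) (b : Fin n → ℕ)
    (E' μ : Finset (Edge n m)) (j : Fin m) : Option (List (Edge n m)) :=
  if h : ∃ p, IsAugPathFrom b E' μ j p ∧ ∀ p', IsAugPathFrom b E' μ j p' → cost p ≤ cost p'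
  then some h.choose else none

/-- The augmenting-path algorithm: process tasks in non-increasing value order, at each step
flipping the augmenting path found by the (deterministic) search given by `cost`. -/
noncomputable def runAug (cost : List (Edge n m) → ℕ) (b : Fin n → ℕ) (q : Fin m → ℝ)
    (E' : Finset (Edge n m)) : Finset (Edge n m) :=
  (sortedTasks m q).foldl (fun μ j =>
    match selectPath cost b E' μ j with
    | some p => applyPath μ p
    | none => μ) ∅

/-- The maximum vertex-weighted b-matching mechanism using breadth-first search. -/
noncomputable def MBFS (b : Fin n → ℕ) (q : Fin m → ℝ) (E' : Finset (Edge n m)) :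
    Finset (Edge n m) := runAug (bfsCost n m) b q E'

/-- The maximum vertex-weighted b-matching mechanism using depth-first search. -/
noncomputable def MDFS (b : Fin n → ℕ) (q : Fin m → ℝ) (E' : Finset (Edge n m)) :
    Finset (Edge n m) := runAug (dfsCost n m) b q E'
/-- The edges of `E` incident to task `j`. -/
def taskEdges (E : Finset (Edge n m)) (j : Fin m) : Finset (Edge n m) :=
  E.filter (fun e => e.2 = j)

/-- The edge set obtained from `E` when task `j` reports `S` instead of its true edges. -/
def tdeviate (E : Finset (Edge n m)) (j : Fin m) (S : Finset (Edge n m)) :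
    Finset (Edge n m) :=
  E.filter (fun e => e.2 ≠ j) ∪ S

/-- Task `j` is matched by `μ`. -/
def taskMatched (μ : Finset (Edge n m)) (j : Fin m) : Prop := ∃ e ∈ μ, e.2 = j


/-!
The augmenting-path algorithm computes a maximum-weight b-matching, whichever augmenting path
its search selects. Tasks are processed in non-increasing order of value; when no augmenting
path starts at the current task `t`, every b-matching `ν` covering `t` can trade `t` for a task
`k` that is already covered, hence at least as valuable (induction on `ν \ μ`: re-match one
saturated agent at a time). So the matching `μ` computed with the true values is optimal and,
if `t_j` is unmatched, avoids `t_j`; in particular `μ` is still feasible when `t_j` hides edges.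
If the report `v < q_j` led to a matching `μ'` covering `t_j`, restoring the value `q_j` would
make `μ'` strictly heavier than `μ`. If `v = q_j`, hiding edges of `t_j` does not change the run
at all: an augmenting walk from another task visits only covered tasks, never the uncovered
`t_j`.
-/

open Finset

theorem sum_le_add_sum_erase {α : Type*} [DecidableEq α] (s : Finset α) {f : α → ℝ} {a : α}
    (ha : 0 ≤ f a) : ∑ x ∈ s, f x ≤ f a + ∑ x ∈ s.erase a, f x := by
  by_cases has : a ∈ s
  · exact (add_sum_erase s f has).ge
  · rw [erase_eq_of_notMem has]
    linarith

theorem card_sdiff_insert_erase_lt {α : Type*} [DecidableEq α] {s t : Finset α} {a b : α}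
    (hb : b ∈ t \ s) (ha : a ∉ t) : (t \ insert b (s.erase a)).card < (t \ s).card := by
  refine card_lt_card (ssubset_iff_of_subset (fun x hx => ?_) |>.2 ⟨b, hb, ?_⟩)
  · obtain ⟨hxt, hxs⟩ := mem_sdiff.1 hx
    refine mem_sdiff.2 ⟨hxt, fun h => hxs (mem_insert_of_mem (mem_erase.2 ⟨?_, h⟩))⟩
    rintro rfl
    exact ha hxt
  · exact fun h => (mem_sdiff.1 h).2 (mem_insert_self _ _)

theorem insert_erase_insert_erase {α : Type*} [DecidableEq α] {s : Finset α} {a b c : α}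
    (ha : a ∈ s) (hbc : b ≠ c) (hac : a ≠ c) :
    insert a ((insert b (s.erase a)).erase c) = insert b (s.erase c) := by
  ext x
  simp only [mem_insert, mem_erase]
  grind

section BMatching

variable {b : Fin n → ℕ} {E' μ ν : Finset (Edge n m)}

def matchedTasks (μ : Finset (Edge n m)) : Finset (Fin m) := μ.image Prod.snd

theorem mem_matchedTasks {l : Fin m} : l ∈ matchedTasks μ ↔ taskMatched μ l := mem_image

theorem mk_mem_matchedTasks {e : Edge n m} (he : e ∈ μ) : e.2 ∈ matchedTasks μ :=
  mem_image_of_mem _ he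

theorem exists_mem_of_mem_matchedTasks {t : Fin m} (ht : t ∈ matchedTasks μ) :
    ∃ i, (i, t) ∈ μ := by
  obtain ⟨⟨i, t⟩, h, rfl⟩ := mem_image.1 ht
  exact ⟨i, h⟩

theorem deg_congr {i : Fin n} (h : ∀ e : Edge n m, e.1 = i → (e ∈ μ ↔ e ∈ ν)) :
    deg μ i = deg ν i := by
  unfold deg
  congr 1
  ext e
  simp only [mem_filter]
  exact ⟨fun ⟨he, hi⟩ => ⟨(h e hi).1 he, hi⟩, fun ⟨he, hi⟩ => ⟨(h e hi).2 he, hi⟩⟩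

theorem deg_mono (h : μ ⊆ ν) (i : Fin n) : deg μ i ≤ deg ν i :=
  card_le_card (filter_subset_filter _ h)

theorem deg_insert_erase {f g : Edge n m} (hf : f ∈ μ) (hg : g ∉ μ) (hfg : f.1 = g.1)
    (i : Fin n) : deg (insert g (μ.erase f)) i = deg μ i := by
  by_cases hi : g.1 = i
  · have hf' : f ∈ μ.filter (fun e => e.1 = i) := mem_filter.2 ⟨hf, hfg.trans hi⟩
    have hg' : g ∉ (μ.filter (fun e => e.1 = i)).erase f := fun h =>
      hg (mem_filter.1 (mem_of_mem_erase h)).1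
    rw [deg, filter_insert, if_pos hi, filter_erase, card_insert_of_notMem hg',
      card_erase_add_one hf']
    rfl
  · refine deg_congr fun e he => ?_
    simp only [mem_insert, mem_erase]
    constructor
    · rintro (rfl | ⟨-, he⟩)
      exacts [absurd he hi, he]
    · intro heμ
      exact Or.inr ⟨by rintro rfl; exact hi (hfg ▸ he), heμ⟩

theorem mem_insert_erase_iff_of_fst_ne {i : Fin n} {t t' : Fin m} {e : Edge n m}
    (he : e.1 ≠ i) : e ∈ insert (i, t) (μ.erase (i, t')) ↔ e ∈ μ := by
  simp only [mem_insert, mem_erase]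
  constructor
  · rintro (rfl | ⟨-, h⟩)
    exacts [absurd rfl he, h]
  · intro h
    exact Or.inr ⟨by rintro rfl; exact he rfl, h⟩

namespace IsBMatching

theorem eq_of_snd_eq (hμ : IsBMatching b E' μ) {e f : Edge n m} (he : e ∈ μ) (hf : f ∈ μ)
    (hef : e.2 = f.2) : e = f :=
  card_le_one.1 (hμ.2.2 e.2) e (mem_filter.2 ⟨he, rfl⟩) f (mem_filter.2 ⟨hf, hef.symm⟩)

theorem weight_eq (hμ : IsBMatching b E' μ) (q : Fin m → ℝ) :
    weight q μ = ∑ t ∈ matchedTasks μ, q t :=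
  (sum_image fun _ he _ hf hef => hμ.eq_of_snd_eq he hf hef).symm

theorem mono (hν : IsBMatching b E' ν) (h : μ ⊆ ν) : IsBMatching b E' μ :=
  ⟨h.trans hν.1, fun i => (deg_mono h i).trans (hν.2.1 i),
    fun j => (card_le_card (filter_subset_filter _ h)).trans (hν.2.2 j)⟩

theorem of_taskwise (hsub : μ ⊆ E') (hdeg : ∀ i, deg μ i ≤ b i)
    (huniq : ∀ e ∈ μ, ∀ f ∈ μ, e.2 = f.2 → e = f) : IsBMatching b E' μ :=
  ⟨hsub, hdeg, fun _ => card_le_one.2 fun e he f hf =>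
    huniq e (mem_filter.1 he).1 f (mem_filter.1 hf).1
      ((mem_filter.1 he).2.trans (mem_filter.1 hf).2.symm)⟩

theorem insert_edge (hμ : IsBMatching b E' μ) {e : Edge n m} (hE : e ∈ E')
    (hdeg : deg μ e.1 < b e.1) (ht : e.2 ∉ matchedTasks μ) :
    IsBMatching b E' (insert e μ) := by
  have he : e ∉ μ := fun h => ht (mk_mem_matchedTasks h)
  refine of_taskwise (insert_subset hE hμ.1) (fun i => ?_) ?_
  · by_cases hi : e.1 = i
    · subst hi
      rw [deg, filter_insert, if_pos rfl, card_insert_of_notMem fun h => he (mem_filter.1 h).1]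
      exact hdeg
    · rw [deg, filter_insert, if_neg hi]
      exact hμ.2.1 i
  · simp only [mem_insert]
    rintro x (rfl | hx) y (rfl | hy) hxy
    · rfl
    · exact absurd (hxy ▸ mk_mem_matchedTasks hy) ht
    · exact absurd (hxy ▸ mk_mem_matchedTasks hx) ht
    · exact hμ.eq_of_snd_eq hx hy hxy

theorem swap (hμ : IsBMatching b E' μ) {f g : Edge n m} (hf : f ∈ μ) (hE : g ∈ E')
    (hg : g.2 ∉ matchedTasks μ) (hfg : f.1 = g.1) :
    IsBMatching b E' (insert g (μ.erase f)) := by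
  have hg' : g ∉ μ := fun h => hg (mk_mem_matchedTasks h)
  refine of_taskwise (insert_subset hE ((erase_subset _ _).trans hμ.1))
    (fun i => deg_insert_erase hf hg' hfg i ▸ hμ.2.1 i) ?_
  simp only [mem_insert]
  rintro x (rfl | hx) y (rfl | hy) hxy
  · rfl
  · exact absurd (hxy ▸ mk_mem_matchedTasks (mem_of_mem_erase hy)) hg
  · exact absurd (hxy ▸ mk_mem_matchedTasks (mem_of_mem_erase hx)) hg
  · exact hμ.eq_of_snd_eq (mem_of_mem_erase hx) (mem_of_mem_erase hy) hxy

theorem matchedTasks_swap (hμ : IsBMatching b E' μ) {f : Edge n m} (hf : f ∈ μ)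
    (g : Edge n m) :
    matchedTasks (insert g (μ.erase f)) = insert g.2 ((matchedTasks μ).erase f.2) := by
  ext l
  simp only [matchedTasks, image_insert, mem_insert, mem_image, mem_erase]
  refine or_congr_right ⟨?_, ?_⟩
  · rintro ⟨e, ⟨hef, he⟩, rfl⟩
    exact ⟨fun h => hef (hμ.eq_of_snd_eq he hf h), e, he, rfl⟩
  · rintro ⟨hl, e, he, rfl⟩
    exact ⟨e, ⟨by rintro rfl; exact hl rfl, he⟩, rfl⟩

end IsBMatching

theorem matchedTasks_filter_ne (t : Fin m) :
    matchedTasks (μ.filter (fun e => e.2 ≠ t)) = (matchedTasks μ).erase t := by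
  ext l
  simp only [matchedTasks, mem_image, mem_filter, mem_erase]
  constructor
  · rintro ⟨e, ⟨he, het⟩, rfl⟩
    exact ⟨het, e, he, rfl⟩
  · rintro ⟨hl, e, he, rfl⟩
    exact ⟨e, ⟨he, hl⟩, rfl⟩

theorem isBMatching_empty : IsBMatching b E' (∅ : Finset (Edge n m)) :=
  ⟨empty_subset _, fun _ => by simp [deg], fun _ => by simp⟩

end BMatching

section AugWalk

variable {b : Fin n → ℕ} {E' μ μ' : Finset (Edge n m)}

inductive IsAugWalk (b : Fin n → ℕ) (E' μ : Finset (Edge n m)) : Fin m → List (Edge n m) → Prop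
  | single {i : Fin n} {t : Fin m} : (i, t) ∈ E' → (i, t) ∉ μ → deg μ i < b i →
      IsAugWalk b E' μ t [(i, t)]
  | cons {i : Fin n} {t t' : Fin m} {p : List (Edge n m)} : (i, t) ∈ E' → (i, t) ∉ μ →
      b i ≤ deg μ i → (i, t') ∈ μ → IsAugWalk b E' μ t' p → IsAugWalk b E' μ t ((i, t) :: p)

namespace IsAugWalk

theorem ne_nil {t : Fin m} {p : List (Edge n m)} (h : IsAugWalk b E' μ t p) : p ≠ [] := by
  cases h <;> simp

theorem exists_cons {t : Fin m} {p : List (Edge n m)} (h : IsAugWalk b E' μ t p) :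
    ∃ e p', p = e :: p' ∧ e.2 = t := by
  cases h <;> exact ⟨_, _, rfl, rfl⟩

theorem mem_edges {t : Fin m} {p : List (Edge n m)} (h : IsAugWalk b E' μ t p) :
    ∀ e ∈ p, e ∈ E' := by
  induction h with
  | single hE => simpa using hE
  | cons hE _ _ _ _ ih => simpa [hE] using ih

theorem snd_mem {t : Fin m} {p : List (Edge n m)} (h : IsAugWalk b E' μ t p) :
    ∀ e ∈ p, e.2 = t ∨ e.2 ∈ matchedTasks μ := by
  induction h with
  | single => simp
  | cons _ _ _ hmat _ ih =>
    simp only [List.mem_cons, forall_eq_or_imp, true_or, true_and]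
    intro e he
    rcases ih e he with h | h
    · exact Or.inr (h ▸ mk_mem_matchedTasks hmat)
    · exact Or.inr h

theorem mono_edges {E'' : Finset (Edge n m)} {t : Fin m} {p : List (Edge n m)}
    (h : IsAugWalk b E' μ t p) (hE : ∀ e ∈ p, e ∈ E'') : IsAugWalk b E'' μ t p := by
  induction h with
  | single _ hμ hdeg => exact .single (hE _ (by simp)) hμ hdeg
  | cons _ hμ hsat hmat _ ih =>
    exact .cons (hE _ (by simp)) hμ hsat hmat (ih fun e he => hE e (List.mem_cons_of_mem _ he))

theorem congr_of_notMem {i : Fin n} (hμ : ∀ e : Edge n m, e.1 ≠ i → (e ∈ μ ↔ e ∈ μ'))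
    {t : Fin m} {p : List (Edge n m)} (h : IsAugWalk b E' μ t p)
    (hi : i ∉ p.map Prod.fst) : IsAugWalk b E' μ' t p := by
  have hdeg : ∀ a, a ≠ i → deg μ a = deg μ' a := fun a ha =>
    deg_congr fun e he => hμ e (he ▸ ha)
  induction h with
  | @single a _ hE hμa hlt =>
    have ha : a ≠ i := by rintro rfl; simp at hi
    exact .single hE (mt (hμ _ ha).2 hμa) (hdeg a ha ▸ hlt)
  | @cons a _ _ _ hE hμa hsat hmat _ ih =>
    simp only [List.map_cons, List.mem_cons, not_or] at hi
    have ha : a ≠ i := Ne.symm hi.1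
    exact .cons hE (mt (hμ _ ha).2 hμa) (hdeg a ha ▸ hsat) ((hμ _ ha).1 hmat) (ih hi.2)

theorem exists_suffix_of_snd_mem {t t' : Fin m} {p : List (Edge n m)}
    (h : IsAugWalk b E' μ t p) (ht' : t' ∈ p.map Prod.snd) :
    ∃ p', p' <:+ p ∧ IsAugWalk b E' μ t' p' := by
  induction h with
  | single hE hμ hdeg =>
    obtain rfl : t' = _ := by simpa using ht'
    exact ⟨_, List.suffix_rfl, .single hE hμ hdeg⟩
  | cons hE hμ hsat hmat hp ih =>
    simp only [List.map_cons, List.mem_cons] at ht'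
    rcases ht' with rfl | ht'
    · exact ⟨_, List.suffix_rfl, .cons hE hμ hsat hmat hp⟩
    · obtain ⟨p', hsuf, hp'⟩ := ih ht'
      exact ⟨p', hsuf.trans (List.suffix_cons _ _), hp'⟩

theorem exists_suffix_of_mem {t : Fin m} {p : List (Edge n m)} (h : IsAugWalk b E' μ t p)
    {e : Edge n m} (he : e ∈ p) (hsat : b e.1 ≤ deg μ e.1) :
    ∃ t' p', e :: p' <:+ p ∧ (e.1, t') ∈ μ ∧ IsAugWalk b E' μ t' p' := by
  induction h with
  | single _ _ hdeg =>
    obtain rfl : e = _ := by simpa using he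
    exact absurd hsat (not_le.2 hdeg)
  | cons _ _ _ hmat hp ih =>
    rcases List.mem_cons.1 he with rfl | he
    · exact ⟨_, _, List.suffix_rfl, hmat, hp⟩
    · obtain ⟨t', p', hsuf, hm, hp'⟩ := ih he
      exact ⟨t', p', hsuf.trans (List.suffix_cons _ _), hm, hp'⟩

end IsAugWalk

end AugWalk

section AugPath

variable {b : Fin n → ℕ} {E' μ : Finset (Edge n m)}

theorem IsAugPathFrom.tail {j : Fin m} {e f : Edge n m} {p : List (Edge n m)}
    (h : IsAugPathFrom b E' μ j (e :: f :: p)) : IsAugPathFrom b E' μ f.2 (f :: p) where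
  ne := List.cons_ne_nil _ _
  starts := by simp
  mem x hx := h.mem x (List.mem_cons_of_mem _ hx)
  matched k hk := by simpa using h.matched (k + 1) (by simpa using hk)
  satInterior k hk := by simpa using h.satInterior (k + 1) (by simpa using hk)
  unsatLast x hx := h.unsatLast x (by simpa [List.getLast?_cons] using hx)
  agentsNodup := (List.nodup_cons.1 h.agentsNodup).2
  tasksNodup := (List.nodup_cons.1 h.tasksNodup).2

theorem isAugPathFrom_iff {j : Fin m} {p : List (Edge n m)} :
    IsAugPathFrom b E' μ j p ↔
      IsAugWalk b E' μ j p ∧ (p.map Prod.fst).Nodup ∧ (p.map Prod.snd).Nodup := by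
  constructor
  · intro h
    refine ⟨?_, h.agentsNodup, h.tasksNodup⟩
    induction p generalizing j with
    | nil => exact absurd rfl h.ne
    | cons e p ih =>
      obtain rfl : e.2 = j := h.starts e rfl
      have he := h.mem e (by simp)
      cases p with
      | nil => exact .single he.1 he.2 (h.unsatLast e rfl)
      | cons f p =>
        exact .cons he.1 he.2 (h.satInterior 0 (by simp)) (h.matched 0 (by simp)) (ih h.tail)
  · rintro ⟨hw, hA, hT⟩
    induction hw with
    | single hE hμ hdeg =>
      exact ⟨by simp, by simp, by simpa using ⟨hE, hμ⟩, by simp, by simp, by simpa using hdeg,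
        hA, hT⟩
    | cons hE hμ hsat hmat hp ih =>
      obtain ⟨f, p, rfl, rfl⟩ := hp.exists_cons
      have htl := ih (List.nodup_cons.1 hA).2 (List.nodup_cons.1 hT).2
      refine ⟨by simp, by simp, ?_, fun k hk => ?_, fun k hk => ?_, fun x hx => ?_, hA, hT⟩
      · simpa [hE, hμ] using htl.mem
      · cases k with
        | zero => simpa using hmat
        | succ k => simpa using htl.matched k (by simpa using hk)
      · cases k with
        | zero => simpa using hsat
        | succ k => simpa using htl.satInterior k (by simpa using hk)
      · exact htl.unsatLast x (by simpa [List.getLast?_cons] using hx)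

end AugPath

section Shortening

variable {b : Fin n → ℕ} {E' μ : Finset (Edge n m)}

theorem exists_isAugPathFrom_cons {i : Fin n} {t t' : Fin m} {w : List (Edge n m)}
    (hE : (i, t) ∈ E') (hμ : (i, t) ∉ μ) (hsat : b i ≤ deg μ i) (hmat : (i, t') ∈ μ)
    (hw : IsAugPathFrom b E' μ t' w) : ∃ w', IsAugPathFrom b E' μ t w' := by
  obtain ⟨hw, hA, hT⟩ := isAugPathFrom_iff.1 hw
  by_cases ht : t ∈ w.map Prod.snd
  · obtain ⟨w', hsuf, hw'⟩ := hw.exists_suffix_of_snd_mem ht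
    exact ⟨w', isAugPathFrom_iff.2
      ⟨hw', hA.sublist (hsuf.sublist.map _), hT.sublist (hsuf.sublist.map _)⟩⟩
  by_cases hi : i ∈ w.map Prod.fst
  · -- Short-cut `w` at the agent `i`: replace everything before `i`'s edge by `(i, t)`.
    obtain ⟨e, he, rfl⟩ := List.mem_map.1 hi
    obtain ⟨t'', w', hsuf, hm, hw'⟩ := hw.exists_suffix_of_mem he hsat
    have hA' : ((e :: w').map Prod.fst).Nodup := hA.sublist (hsuf.sublist.map _)
    have hsub : w'.Sublist w := (List.sublist_cons_self e w').trans hsuf.sublist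
    refine ⟨(e.1, t) :: w', isAugPathFrom_iff.2 ⟨.cons hE hμ hsat hm hw', by simpa using hA', ?_⟩⟩
    simp only [List.map_cons, List.nodup_cons]
    exact ⟨fun h => ht ((hsub.map _).subset h), hT.sublist (hsub.map _)⟩
  · exact ⟨(i, t) :: w, isAugPathFrom_iff.2
      ⟨.cons hE hμ hsat hmat hw, by simp [hi, hA], by simp [ht, hT]⟩⟩

theorem IsAugWalk.exists_isAugPathFrom {t : Fin m} {p : List (Edge n m)}
    (h : IsAugWalk b E' μ t p) : ∃ p', IsAugPathFrom b E' μ t p' := by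
  induction h with
  | single hE hμ hdeg => exact ⟨_, isAugPathFrom_iff.2 ⟨.single hE hμ hdeg, by simp, by simp⟩⟩
  | cons hE hμ hsat hmat _ ih =>
    obtain ⟨w, hw⟩ := ih
    exact exists_isAugPathFrom_cons hE hμ hsat hmat hw

theorem IsAugWalk.exists_of_swap {i : Fin n} {j j₂ : Fin m} {p : List (Edge n m)}
    (hE : (i, j) ∈ E') (hμ : (i, j) ∉ μ) (hf : (i, j₂) ∈ μ) (hsat : b i ≤ deg μ i)
    (h : IsAugWalk b E' (insert (i, j) (μ.erase (i, j₂))) j₂ p) :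
    ∃ p', IsAugWalk b E' μ j p' := by
  have hagree : ∀ e : Edge n m, e.1 ≠ i → (e ∈ insert (i, j) (μ.erase (i, j₂)) ↔ e ∈ μ) :=
    fun _ he => mem_insert_erase_iff_of_fst_ne he
  have key : ∀ {t p}, IsAugWalk b E' (insert (i, j) (μ.erase (i, j₂))) t p →
      i ∈ p.map Prod.fst → ∃ p', IsAugWalk b E' μ j p' := by
    intro t p h
    induction h with
    | @single a _ _ _ hlt =>
      intro hi
      obtain rfl : i = a := by simpa using hi
      rw [deg_insert_erase hf hμ rfl] at hlt
      exact absurd hsat (not_le.2 hlt)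
    | @cons a _ s p _ _ _ hmat hp ih =>
      intro hi
      by_cases hip : i ∈ p.map Prod.fst
      · exact ih hip
      obtain rfl : i = a := by simpa [hip] using hi
      have hp' := hp.congr_of_notMem hagree hip
      rcases mem_insert.1 hmat with hs | hs
      · obtain rfl : s = j := congrArg Prod.snd hs
        exact ⟨p, hp'⟩
      · exact ⟨_, .cons hE hμ hsat (mem_of_mem_erase hs) hp'⟩
  by_cases hi : i ∈ p.map Prod.fst
  · exact key h hi
  · exact ⟨_, .cons hE hμ hsat hf (h.congr_of_notMem hagree hi)⟩

end Shortening

section ApplyPath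

variable {b : Fin n → ℕ} {E' μ : Finset (Edge n m)}

theorem fst_mem_of_mem_pathMatched {p : List (Edge n m)} {e : Edge n m}
    (h : e ∈ pathMatched p) : e.1 ∈ p.map Prod.fst := by
  obtain ⟨x, hx, rfl⟩ := List.mem_map.1 h
  exact List.mem_map.2 ⟨x.1, (List.of_mem_zip hx).1, rfl⟩

theorem matchedTasks_subset_applyPath (p : List (Edge n m)) :
    matchedTasks μ ⊆ matchedTasks (applyPath μ p) := by
  intro l hl
  obtain ⟨e, he, rfl⟩ := mem_image.1 hl
  by_cases hM : e ∈ pathMatched p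
  · -- A removed matching edge `(i_ℓ, j_{ℓ+1})` hands its task over to the path edge
    -- `(i_{ℓ+1}, j_{ℓ+1})`.
    obtain ⟨x, hx, rfl⟩ := List.mem_map.1 hM
    exact mk_mem_matchedTasks (e := x.2) (mem_union_right _
      (List.mem_toFinset.2 (List.mem_of_mem_tail (List.of_mem_zip hx).2)))
  · exact mk_mem_matchedTasks (mem_union_left _ (mem_sdiff.2 ⟨he, List.mem_toFinset.2.mt
      (by simpa using hM)⟩))

theorem applyPath_cons_cons {e f : Edge n m} {p : List (Edge n m)}
    (h : e.1 ∉ (f :: p).map Prod.fst) :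
    applyPath μ (e :: f :: p) = applyPath (insert e (μ.erase (e.1, f.2))) (f :: p) := by
  have he : e ∉ pathMatched (f :: p) := fun h' => h (fst_mem_of_mem_pathMatched h')
  ext x
  simp only [applyPath, pathMatched, List.tail_cons, List.zip_cons_cons, List.map_cons,
    List.toFinset_cons, mem_union, mem_sdiff, mem_insert, mem_erase, List.mem_toFinset] at he ⊢
  by_cases hx : x = e
  · subst hx; tauto
  · tauto

theorem IsAugWalk.applyPath {t : Fin m} {p : List (Edge n m)} (hp : IsAugWalk b E' μ t p)
    (hA : (p.map Prod.fst).Nodup) (hμ : IsBMatching b E' μ) (ht : t ∉ matchedTasks μ) :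
    IsBMatching b E' (applyPath μ p) ∧
      matchedTasks (applyPath μ p) = insert t (matchedTasks μ) := by
  induction p generalizing μ t with
  | nil => exact absurd rfl hp.ne_nil
  | cons e p ih =>
    cases hp with
    | @single i _ hE _ hdeg =>
      have happ : applyPath μ [(i, t)] = insert (i, t) μ := by simp [applyPath, pathMatched]
      rw [happ, matchedTasks, image_insert]
      exact ⟨hμ.insert_edge hE hdeg ht, rfl⟩
    | @cons i _ _ p hE _ _ hmat hp =>
      obtain ⟨f, p, rfl, rfl⟩ := hp.exists_cons
      rw [List.map_cons, List.nodup_cons] at hA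
      have hfμ : f.2 ∈ matchedTasks μ := mk_mem_matchedTasks (e := (i, f.2)) hmat
      have hft : f.2 ≠ t := fun h => ht (h ▸ hfμ)
      have hT₁ := hμ.matchedTasks_swap hmat (i, t)
      have hp₁ := hp.congr_of_notMem (μ' := insert (i, t) (μ.erase (i, f.2)))
        (fun _ he => (mem_insert_erase_iff_of_fst_ne he).symm) hA.1
      obtain ⟨hBM, hT⟩ := ih hp₁ hA.2 (hμ.swap (f := (i, f.2)) (g := (i, t)) hmat hE ht rfl)
        (by simp [hT₁, hft])
      rw [applyPath_cons_cons hA.1]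
      refine ⟨hBM, ?_⟩
      rw [hT, hT₁, insert_comm, insert_erase hfμ]

end ApplyPath

section Exchange

variable {b : Fin n → ℕ} {E' μ ν : Finset (Edge n m)}

theorem exists_mem_sdiff_of_deg_le {i : Fin n} {j : Fin m} (he : (i, j) ∈ ν \ μ)
    (hdeg : deg ν i ≤ deg μ i) : ∃ t, (i, t) ∈ μ \ ν := by
  by_contra! h
  have hsub : μ.filter (fun x => x.1 = i) ⊂ ν.filter (fun x => x.1 = i) := by
    refine ssubset_iff_of_subset (fun x hx => ?_) |>.2 ⟨(i, j), ?_, ?_⟩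
    · obtain ⟨hxμ, rfl⟩ := mem_filter.1 hx
      by_contra hxν
      exact h x.2 (mem_sdiff.2 ⟨hxμ, fun h' => hxν (mem_filter.2 ⟨h', rfl⟩)⟩)
    · exact mem_filter.2 ⟨(mem_sdiff.1 he).1, rfl⟩
    · exact fun h' => (mem_sdiff.1 he).2 (mem_filter.1 h').1
  exact (card_lt_card hsub).not_ge hdeg

theorem exists_exchange {μ ν : Finset (Edge n m)} (hμ : IsBMatching b E' μ)
    (hν : IsBMatching b E' ν) {j : Fin m} (hjμ : j ∉ matchedTasks μ) (hjν : j ∈ matchedTasks ν)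
    (hno : ∀ p, ¬ IsAugWalk b E' μ j p) :
    ∃ k ∈ matchedTasks μ \ matchedTasks ν, ∃ ν', IsBMatching b E' ν' ∧
      matchedTasks ν' = insert k ((matchedTasks ν).erase j) ∧ μ ∩ ν ⊆ ν' := by
  obtain ⟨i, hiν⟩ := exists_mem_of_mem_matchedTasks hjν
  have hiμ : (i, j) ∉ μ := fun h => hjμ (mk_mem_matchedTasks (e := (i, j)) h)
  have hE : (i, j) ∈ E' := hν.1 hiν
  have hsat : b i ≤ deg μ i := not_lt.1 fun h => hno _ (.single hE hiμ h)
  obtain ⟨j₂, hf⟩ := exists_mem_sdiff_of_deg_le (mem_sdiff.2 ⟨hiν, hiμ⟩) ((hν.2.1 i).trans hsat)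
  obtain ⟨hfμ, hfν⟩ := mem_sdiff.1 hf
  have hj₂ : j₂ ∈ matchedTasks μ := mk_mem_matchedTasks (e := (i, j₂)) hfμ
  have hj₂j : j₂ ≠ j := fun h => hjμ (h ▸ hj₂)
  by_cases hj₂ν : j₂ ∈ matchedTasks ν
  · -- Move `i` from `j₂` to `j` in `μ` and recurse on the task `j₂` it gives up.
    set μ₂ := insert (i, j) (μ.erase (i, j₂))
    have hT₂ : matchedTasks μ₂ = insert j ((matchedTasks μ).erase j₂) :=
      hμ.matchedTasks_swap hfμ _
    have hj₂μ₂ : j₂ ∉ matchedTasks μ₂ := by simp [hT₂, hj₂j]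
    have hno₂ : ∀ p, ¬ IsAugWalk b E' μ₂ j₂ p := fun p hp =>
      (hp.exists_of_swap hE hiμ hfμ hsat).elim hno
    have hdec : (ν \ μ₂).card < (ν \ μ).card :=
      card_sdiff_insert_erase_lt (mem_sdiff.2 ⟨hiν, hiμ⟩) hfν
    obtain ⟨k, hk, ν', hν', hT', hsub⟩ :=
      exists_exchange (μ := μ₂) (hμ.swap hfμ hE hjμ rfl) hν hj₂μ₂ hj₂ν hno₂
    obtain ⟨hkμ₂, hkν⟩ := mem_sdiff.1 hk
    have hkj : k ≠ j := by rintro rfl; exact hkν hjν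
    have hkj₂ : k ≠ j₂ := by rintro rfl; exact hj₂μ₂ hkμ₂
    have hkμ : k ∈ matchedTasks μ := by
      simp only [hT₂, mem_insert, mem_erase, hkj, false_or] at hkμ₂
      exact hkμ₂.2
    have hiν' : (i, j) ∈ ν' := hsub (mem_inter.2 ⟨mem_insert_self _ _, hiν⟩)
    have hj₂ν' : j₂ ∉ matchedTasks ν' := by simp [hT', hkj₂.symm]
    refine ⟨k, mem_sdiff.2 ⟨hkμ, hkν⟩, insert (i, j₂) (ν'.erase (i, j)),
      hν'.swap hiν' (hμ.1 hfμ) hj₂ν' rfl, ?_, fun e he => ?_⟩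
    · rw [hν'.matchedTasks_swap hiν', hT', insert_erase_insert_erase hj₂ν hkj hj₂j]
    · obtain ⟨heμ, heν⟩ := mem_inter.1 he
      have heμ₂ : e ∈ μ₂ := mem_insert_of_mem (mem_erase.2 ⟨by rintro rfl; exact hfν heν, heμ⟩)
      exact mem_insert_of_mem (mem_erase.2 ⟨by rintro rfl; exact hiμ heμ,
        hsub (mem_inter.2 ⟨heμ₂, heν⟩)⟩)
  · refine ⟨j₂, mem_sdiff.2 ⟨hj₂, hj₂ν⟩, insert (i, j₂) (ν.erase (i, j)),
      hν.swap hiν (hμ.1 hfμ) hj₂ν rfl, hν.matchedTasks_swap hiν _, fun e he => ?_⟩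
    obtain ⟨heμ, heν⟩ := mem_inter.1 he
    exact mem_insert_of_mem (mem_erase.2 ⟨by rintro rfl; exact hiμ heμ, heν⟩)
termination_by (ν \ μ).card

end Exchange

section Greedy

variable {b : Fin n → ℕ} {E' μ : Finset (Edge n m)} {cost : List (Edge n m) → ℕ}
  {q : Fin m → ℝ}

theorem isAugPathFrom_of_selectPath_eq_some {j : Fin m} {p : List (Edge n m)}
    (h : selectPath cost b E' μ j = some p) : IsAugPathFrom b E' μ j p := by
  unfold selectPath at h
  split_ifs at h with hex
  exact Option.some.inj h ▸ hex.choose_spec.1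

theorem selectPath_eq_none_iff {j : Fin m} :
    selectPath cost b E' μ j = none ↔ ∀ p, ¬ IsAugPathFrom b E' μ j p := by
  unfold selectPath
  split_ifs with hex
  · simpa using ⟨_, hex.choose_spec.1⟩
  · refine iff_of_true rfl fun p hp => hex ?_
    obtain ⟨p, hp, hmin⟩ := WellFounded.has_min (measure cost).wf {p | IsAugPathFrom b E' μ j p}
      ⟨p, hp⟩
    exact ⟨p, hp, fun p' hp' => not_lt.1 (hmin p' hp')⟩

noncomputable def augStep (cost : List (Edge n m) → ℕ) (b : Fin n → ℕ)
    (E' μ : Finset (Edge n m)) (t : Fin m) : Finset (Edge n m) :=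
  match selectPath cost b E' μ t with
  | some p => applyPath μ p
  | none => μ

theorem runAug_eq_foldl (q : Fin m → ℝ) :
    runAug cost b q E' = (sortedTasks m q).foldl (augStep cost b E') ∅ := rfl

theorem matchedTasks_subset_augStep (t : Fin m) :
    matchedTasks μ ⊆ matchedTasks (augStep cost b E' μ t) := by
  unfold augStep
  split
  exacts [matchedTasks_subset_applyPath _, subset_rfl]

theorem mem_matchedTasks_augStep {t : Fin m} {p : List (Edge n m)}
    (hp : IsAugPathFrom b E' μ t p) : t ∈ matchedTasks (augStep cost b E' μ t) := by
  unfold augStep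
  split
  · rename_i hsel
    obtain ⟨hw, -⟩ := isAugPathFrom_iff.1 (isAugPathFrom_of_selectPath_eq_some hsel)
    obtain ⟨e, p'', rfl, rfl⟩ := hw.exists_cons
    exact mk_mem_matchedTasks (mem_union_right _ (by simp))
  · rename_i hsel
    exact absurd hp (selectPath_eq_none_iff.1 hsel p)

def IsMaxMatchingOn (b : Fin n → ℕ) (q : Fin m → ℝ) (E' : Finset (Edge n m))
    (P : Finset (Fin m)) (μ : Finset (Edge n m)) : Prop :=
  IsBMatching b E' μ ∧ matchedTasks μ ⊆ P ∧ ∀ ν, IsBMatching b E' ν → matchedTasks ν ⊆ P →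
    ∑ t ∈ matchedTasks ν, q t ≤ ∑ t ∈ matchedTasks μ, q t

theorem IsMaxMatchingOn.step {P : Finset (Fin m)} {t : Fin m} (hμ : IsMaxMatchingOn b q E' P μ)
    (hq : 0 ≤ q t) (htP : t ∉ P) (hle : ∀ k ∈ P, q t ≤ q k) :
    IsMaxMatchingOn b q E' (insert t P) (augStep cost b E' μ t) := by
  obtain ⟨hBM, hTP, hopt⟩ := hμ
  have htμ : t ∉ matchedTasks μ := fun h => htP (hTP h)
  unfold augStep
  split
  · rename_i p hsel
    obtain ⟨hw, hA, -⟩ := isAugPathFrom_iff.1 (isAugPathFrom_of_selectPath_eq_some hsel)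
    obtain ⟨hBM', hT'⟩ := hw.applyPath hA hBM htμ
    refine ⟨hBM', hT' ▸ insert_subset_insert t hTP, fun ν hν hνP => ?_⟩
    have hrest := hopt _ (hν.mono (filter_subset (fun e => e.2 ≠ t) ν))
      (by rw [matchedTasks_filter_ne]; exact subset_insert_iff.1 hνP)
    rw [matchedTasks_filter_ne] at hrest
    rw [hT', sum_insert htμ]
    linarith [sum_le_add_sum_erase (matchedTasks ν) hq]
  · rename_i hsel
    refine ⟨hBM, hTP.trans (subset_insert _ _), fun ν hν hνP => ?_⟩
    by_cases htν : t ∈ matchedTasks ν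
    · have hno : ∀ p, ¬ IsAugWalk b E' μ t p := fun p hp =>
        hp.exists_isAugPathFrom.elim (selectPath_eq_none_iff.1 hsel)
      obtain ⟨k, hk, ν', hν', hT', -⟩ := exists_exchange hBM hν htμ htν hno
      obtain ⟨hkμ, hkν⟩ := mem_sdiff.1 hk
      calc ∑ l ∈ matchedTasks ν, q l = q t + ∑ l ∈ (matchedTasks ν).erase t, q l :=
            (add_sum_erase _ _ htν).symm
        _ ≤ q k + ∑ l ∈ (matchedTasks ν).erase t, q l := by gcongr; exact hle k (hTP hkμ)
        _ = ∑ l ∈ matchedTasks ν', q l := by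
            rw [hT', sum_insert fun h => hkν (mem_of_mem_erase h)]
        _ ≤ ∑ l ∈ matchedTasks μ, q l :=
            hopt ν' hν' (hT' ▸ insert_subset (hTP hkμ) (subset_insert_iff.1 hνP))
    · exact hopt ν hν ((subset_insert_iff_of_notMem htν).1 hνP)

theorem IsMaxMatchingOn.foldl_augStep (hq : ∀ t, 0 ≤ q t) {L : List (Fin m)}
    (hL : L.Pairwise (fun a c => q c ≤ q a)) (hnd : L.Nodup) {P : Finset (Fin m)}
    (hμ : IsMaxMatchingOn b q E' P μ) (hLP : ∀ t ∈ L, t ∉ P)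
    (hle : ∀ t ∈ L, ∀ k ∈ P, q t ≤ q k) :
    IsMaxMatchingOn b q E' (P ∪ L.toFinset) (L.foldl (augStep cost b E') μ) := by
  induction L generalizing P μ with
  | nil => simpa using hμ
  | cons t L ih =>
    rw [List.pairwise_cons] at hL
    rw [List.nodup_cons] at hnd
    have h := ih hL.2 hnd.2
      (hμ.step (cost := cost) (hq t) (hLP t List.mem_cons_self) (hle t List.mem_cons_self))
      (fun t' ht' => by
        simp only [mem_insert, not_or]
        exact ⟨fun h => hnd.1 (h ▸ ht'), hLP t' (List.mem_cons_of_mem _ ht')⟩)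
      (fun t' ht' k hk => by
        rcases mem_insert.1 hk with rfl | hk
        exacts [hL.1 t' ht', hle t' (List.mem_cons_of_mem _ ht') k hk])
    rwa [List.toFinset_cons, union_insert, ← insert_union]

theorem sortedTasks_nodup (q : Fin m → ℝ) : (sortedTasks m q).Nodup :=
  (List.perm_insertionSort _ _).nodup_iff.2 (List.nodup_finRange m)

theorem mem_sortedTasks (q : Fin m → ℝ) (t : Fin m) : t ∈ sortedTasks m q :=
  (List.perm_insertionSort _ _).mem_iff.2 (List.mem_finRange t)

theorem sortedTasks_pairwise (q : Fin m → ℝ) :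
    (sortedTasks m q).Pairwise (fun a c => q c ≤ q a) :=
  haveI : Std.Total (fun a c : Fin m => q c ≤ q a) := ⟨fun a c => le_total (q c) (q a)⟩
  haveI : IsTrans (Fin m) (fun a c => q c ≤ q a) := ⟨fun _ _ _ h₁ h₂ => h₂.trans h₁⟩
  List.pairwise_insertionSort _ _

theorem isMaxMatching_runAug (cost : List (Edge n m) → ℕ) (hq : ∀ t, 0 ≤ q t) :
    IsMaxMatching b q E' (runAug cost b q E') := by
  have h₀ : IsMaxMatchingOn b q E' ∅ ∅ :=
    ⟨isBMatching_empty, by simp [matchedTasks], fun ν _ hν => by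
      rw [subset_empty.1 hν]
      simp [matchedTasks]⟩
  have h := h₀.foldl_augStep (cost := cost) hq (sortedTasks_pairwise q) (sortedTasks_nodup q)
    (by simp) (by simp)
  rw [← runAug_eq_foldl] at h
  refine ⟨h.1, fun ν hν => ?_⟩
  rw [hν.weight_eq, h.1.weight_eq]
  exact h.2.2 ν hν fun t _ => by simp [mem_sortedTasks]

end Greedy

section EdgeRestriction

variable {b : Fin n → ℕ} {cost : List (Edge n m) → ℕ} {E E'' μ : Finset (Edge n m)} {j : Fin m}

theorem IsAugPathFrom.mono_edges {E₁ E₂ : Finset (Edge n m)} {t : Fin m} {p : List (Edge n m)}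
    (h : IsAugPathFrom b E₁ μ t p) (hE : E₁ ⊆ E₂) : IsAugPathFrom b E₂ μ t p := by
  obtain ⟨hw, hA, hT⟩ := isAugPathFrom_iff.1 h
  exact isAugPathFrom_iff.2 ⟨hw.mono_edges fun e he => hE (hw.mem_edges e he), hA, hT⟩

theorem isAugPathFrom_congr_edges (hE₁ : E.filter (fun e => e.2 ≠ j) ⊆ E'') (hE₂ : E'' ⊆ E)
    (hj : j ∉ matchedTasks μ) {t : Fin m} (htj : t ≠ j) :
    IsAugPathFrom b E'' μ t = IsAugPathFrom b E μ t := by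
  funext p
  refine propext ⟨fun h => h.mono_edges hE₂, fun h => ?_⟩
  obtain ⟨hw, hA, hT⟩ := isAugPathFrom_iff.1 h
  refine isAugPathFrom_iff.2
    ⟨hw.mono_edges fun e he => hE₁ (mem_filter.2 ⟨hw.mem_edges e he, ?_⟩), hA, hT⟩
  rintro rfl
  rcases hw.snd_mem e he with h | h
  exacts [htj h.symm, hj h]

theorem augStep_congr_edges (hE₁ : E.filter (fun e => e.2 ≠ j) ⊆ E'') (hE₂ : E'' ⊆ E)
    {t : Fin m} (hj : j ∉ matchedTasks (augStep cost b E μ t)) :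
    augStep cost b E'' μ t = augStep cost b E μ t := by
  suffices h : IsAugPathFrom b E'' μ t = IsAugPathFrom b E μ t by
    simp only [augStep, selectPath, h]
  by_cases htj : t = j
  · subst htj
    have hno : ∀ p, ¬ IsAugPathFrom b E μ t p := fun p hp => hj (mem_matchedTasks_augStep hp)
    funext p
    exact propext (iff_of_false (fun hp => hno p (hp.mono_edges hE₂)) (hno p))
  · exact isAugPathFrom_congr_edges hE₁ hE₂ (fun h => hj (matchedTasks_subset_augStep t h)) htj

theorem matchedTasks_subset_foldl_augStep (L : List (Fin m)) :
    matchedTasks μ ⊆ matchedTasks (L.foldl (augStep cost b E) μ) := by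
  induction L generalizing μ with
  | nil => exact subset_rfl
  | cons t L ih => exact (matchedTasks_subset_augStep t).trans ih

theorem foldl_augStep_congr_edges (hE₁ : E.filter (fun e => e.2 ≠ j) ⊆ E'') (hE₂ : E'' ⊆ E)
    (L : List (Fin m)) (hj : j ∉ matchedTasks (L.foldl (augStep cost b E) μ)) :
    L.foldl (augStep cost b E'') μ = L.foldl (augStep cost b E) μ := by
  induction L generalizing μ with
  | nil => rfl
  | cons t L ih =>
    rw [List.foldl_cons] at hj ⊢
    rw [augStep_congr_edges hE₁ hE₂ fun h => hj (matchedTasks_subset_foldl_augStep L h)]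
    exact ih hj

theorem runAug_congr_edges (hE₁ : E.filter (fun e => e.2 ≠ j) ⊆ E'') (hE₂ : E'' ⊆ E)
    {q : Fin m → ℝ} (hj : ¬ taskMatched (runAug cost b q E) j) :
    runAug cost b q E'' = runAug cost b q E :=
  foldl_augStep_congr_edges hE₁ hE₂ _ (mt mem_matchedTasks.1 hj)

end EdgeRestriction

theorem runAug_not_taskMatched_update (cost : List (Edge n m) → ℕ) {b : Fin n → ℕ}
    {q : Fin m → ℝ} (hq : ∀ t, 0 ≤ q t) {E E'' : Finset (Edge n m)} {j : Fin m}
    (hE₁ : E.filter (fun e => e.2 ≠ j) ⊆ E'') (hE₂ : E'' ⊆ E) {v : ℝ} (hv : 0 ≤ v)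
    (hvq : v ≤ q j) (hj : ¬ taskMatched (runAug cost b q E) j) :
    ¬ taskMatched (runAug cost b (Function.update q j v) E'') j := by
  rcases hvq.eq_or_lt with rfl | hlt
  · rwa [Function.update_eq_self, runAug_congr_edges hE₁ hE₂ hj]
  intro hj''
  have hq' : ∀ t, 0 ≤ Function.update q j v t := fun t => by
    rw [Function.update_apply]; split_ifs; exacts [hv, hq t]
  obtain ⟨⟨hsub, hμ⟩, hopt⟩ := isMaxMatching_runAug cost hq (b := b) (E' := E)
  obtain ⟨⟨hsub'', hμ''⟩, hopt''⟩ := isMaxMatching_runAug cost hq' (b := b) (E' := E'')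
  have hjμ : j ∉ matchedTasks (runAug cost b q E) := mt mem_matchedTasks.1 hj
  have hjμ'' : j ∈ matchedTasks (runAug cost b (Function.update q j v) E'') :=
    mem_matchedTasks.2 hj''
  have h₁ := hopt _ ⟨hsub''.trans hE₂, hμ''⟩
  have h₂ := hopt'' _ ⟨fun e he => hE₁ (mem_filter.2 ⟨hsub he,
    fun h => hjμ (h ▸ mk_mem_matchedTasks he)⟩), hμ⟩
  rw [IsBMatching.weight_eq ⟨hsub, hμ⟩, IsBMatching.weight_eq ⟨hsub''.trans hE₂, hμ''⟩,
    sum_eq_add_sum_sdiff_singleton_of_mem hjμ''] at h₁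
  rw [IsBMatching.weight_eq ⟨hsub, hμ⟩, IsBMatching.weight_eq ⟨hsub'', hμ''⟩,
    sum_update_of_notMem hjμ, sum_update_of_mem hjμ''] at h₂
  linarith

/-- When tasks may additionally underreport their values, `M_BFS` and
`M_DFS` remain truthful: if task `j` is unmatched when it reports its true value `q j`, it
is also unmatched when it reports any value `v` with `0 < v ≤ q j` (edges fixed); and,
combining with edge-hiding, a task unmatched under truthful reporting stays unmatched under
any joint (nonempty edge subset, lower value) report — so truthful reporting is a dominant
strategy for tasks bounded by their statements. -/
theorem task_value_manipulation_truthful (n m : ℕ) (b : Fin n → ℕ) (q : Fin m → ℝ)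
    (hq : ∀ j', 0 < q j') (E : Finset (Edge n m)) (j : Fin m)
    (v : ℝ) (hv : 0 < v) (hvq : v ≤ q j) :
    (¬ taskMatched (MBFS b q E) j → ¬ taskMatched (MBFS b (Function.update q j v) E) j) ∧
    (¬ taskMatched (MDFS b q E) j → ¬ taskMatched (MDFS b (Function.update q j v) E) j) ∧
    (∀ S, S ⊆ taskEdges E j → S.Nonempty →
      (¬ taskMatched (MBFS b q E) j →
        ¬ taskMatched (MBFS b (Function.update q j v) (tdeviate E j S)) j) ∧
      (¬ taskMatched (MDFS b q E) j →
        ¬ taskMatched (MDFS b (Function.update q j v) (tdeviate E j S)) j)) := by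
  have hq₀ : ∀ t, 0 ≤ q t := fun t => (hq t).le
  have key := fun cost E'' hE₁ hE₂ =>
    runAug_not_taskMatched_update (b := b) (E := E) (E'' := E'') cost hq₀ hE₁ hE₂ hv.le hvq
  refine ⟨key _ _ (filter_subset _ _) subset_rfl, key _ _ (filter_subset _ _) subset_rfl,
    fun S hS _ => ?_⟩
  have hE₁ : E.filter (fun e => e.2 ≠ j) ⊆ tdeviate E j S := subset_union_left
  have hE₂ : tdeviate E j S ⊆ E := union_subset (filter_subset _ _) (hS.trans (filter_subset _ _))
  exact ⟨key _ _ hE₁ hE₂, key _ _ hE₁ hE₂⟩
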